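/- Combining the optimal contrastive solution with the diffused tilting lemma: if π*_{t,θ}(a_t|s,t) ∝ μ_t(a_t|s,t) · exp( log E_{μ_t(a|a_t,s,t)} e^{Q(s,a)} ), then π*_{t,θ}(·|s,t) equals the Gaussian-diffused marginal of π*(a|s) ∝ μ(a|s) e^{Q(s,a)}: π*_{t,θ}(a_t|s,t) = ∫ N(a_t|α_t a, σ_t² I) π*(a|s) da. -/

import Mathlib

open MeasureTheory Real

/-! Since the posterior is `μ(a) N(x | αₜ a, σₜ²) / μₜ(x)`, the factor `μₜ(x)` cancels in
`μₜ(x) · E_post[e^Q]`, which is therefore the diffusion `∫ N(x | αₜ a, σₜ²) μ(a) e^{Q(a)} da`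
of the unnormalised tilted density. Diffusion preserves total mass (Fubini, and each Gaussian
integrates to one), so the two normalising constants agree, `Zₜ = Z`. -/

noncomputable def gaussDensity (d : ℕ) (σ : ℝ) (m x : EuclideanSpace ℝ (Fin d)) : ℝ :=
  (2 * Real.pi * σ ^ 2) ^ (-(d : ℝ) / 2) * Real.exp (-‖x - m‖ ^ 2 / (2 * σ ^ 2))

section

variable {d : ℕ} {σ : ℝ}

lemma continuous_gaussDensity_uncurry (d : ℕ) (σ : ℝ) :
    Continuous (Function.uncurry (gaussDensity d σ)) := by
  unfold gaussDensity
  fun_prop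

lemma gaussDensity_pos (hσ : 0 < σ) (m x : EuclideanSpace ℝ (Fin d)) :
    0 < gaussDensity d σ m x := by
  unfold gaussDensity
  positivity

lemma gaussDensity_nonneg (m x : EuclideanSpace ℝ (Fin d)) : 0 ≤ gaussDensity d σ m x := by
  unfold gaussDensity
  positivity

lemma gaussDensity_le (m x : EuclideanSpace ℝ (Fin d)) :
    gaussDensity d σ m x ≤ (2 * π * σ ^ 2) ^ (-(d : ℝ) / 2) := by
  unfold gaussDensity
  have hexp : exp (-‖x - m‖ ^ 2 / (2 * σ ^ 2)) ≤ 1 :=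
    exp_le_one_iff.2 (div_nonpos_of_nonpos_of_nonneg (by simp) (by positivity))
  exact mul_le_of_le_one_right (by positivity) hexp

lemma integral_gaussDensity (hσ : 0 < σ) (m : EuclideanSpace ℝ (Fin d)) :
    ∫ x, gaussDensity d σ m x = 1 := by
  unfold gaussDensity
  have hb : (0 : ℝ) < 1 / (2 * σ ^ 2) := by positivity
  have hshift : ∫ x : EuclideanSpace ℝ (Fin d), exp (-‖x - m‖ ^ 2 / (2 * σ ^ 2))
      = ∫ x : EuclideanSpace ℝ (Fin d), exp (-(1 / (2 * σ ^ 2)) * ‖x‖ ^ 2) := by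
    rw [← integral_sub_right_eq_self (fun x : EuclideanSpace ℝ (Fin d) =>
      exp (-(1 / (2 * σ ^ 2)) * ‖x‖ ^ 2)) m]
    congr 1 with x
    congr 1
    field_simp
  have hvar : π / (1 / (2 * σ ^ 2)) = 2 * π * σ ^ 2 := by field_simp
  rw [integral_const_mul, hshift, GaussianFourier.integral_rexp_neg_mul_sq_norm hb,
    finrank_euclideanSpace_fin, hvar, ← rpow_add (by positivity), neg_div, neg_add_cancel,
    rpow_zero]

lemma integrable_gaussDensity (hσ : 0 < σ) (m : EuclideanSpace ℝ (Fin d)) :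
    Integrable (fun x => gaussDensity d σ m x) :=
  integrable_of_integral_eq_one (integral_gaussDensity hσ m)

lemma integrable_gaussDensity_smul_mul (α : ℝ) (y : EuclideanSpace ℝ (Fin d))
    {f : EuclideanSpace ℝ (Fin d) → ℝ} (hf : Integrable f) :
    Integrable (fun a => gaussDensity d σ (α • a) y * f a) := by
  refine hf.bdd_mul (c := (2 * π * σ ^ 2) ^ (-(d : ℝ) / 2)) ?_ (ae_of_all _ fun a => ?_)
  · exact ((continuous_gaussDensity_uncurry d σ).comp
      ((continuous_const_smul α).prodMk continuous_const)).aestronglyMeasurable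
  · rw [norm_of_nonneg (gaussDensity_nonneg _ _)]
    exact gaussDensity_le _ _

lemma integral_gaussDensity_smul_mul_pos (hσ : 0 < σ) (α : ℝ) (y : EuclideanSpace ℝ (Fin d))
    {f : EuclideanSpace ℝ (Fin d) → ℝ} (hf : Integrable f) (hf_pos : ∀ a, 0 < f a) :
    0 < ∫ a, gaussDensity d σ (α • a) y * f a := by
  have hpos : ∀ a, 0 < gaussDensity d σ (α • a) y * f a :=
    fun a => mul_pos (gaussDensity_pos hσ _ _) (hf_pos a)
  refine (integral_pos_iff_support_of_nonneg (fun a => (hpos a).le)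
    (integrable_gaussDensity_smul_mul α y hf)).2 ?_
  rw [Function.support_eq_univ fun a => (hpos a).ne']
  exact isOpen_univ.measure_pos volume Set.univ_nonempty

lemma integral_integral_gaussDensity_smul_mul (hσ : 0 < σ) (α : ℝ)
    {f : EuclideanSpace ℝ (Fin d) → ℝ} (hf : Integrable f) :
    ∫ y, ∫ a, gaussDensity d σ (α • a) y * f a = ∫ a, f a := by
  have hmeas : AEStronglyMeasurable
      (Function.uncurry fun y a => gaussDensity d σ (α • a) y * f a) (volume.prod volume) :=
    ((continuous_gaussDensity_uncurry d σ).comp ((continuous_const_smul α).comp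
      continuous_snd |>.prodMk continuous_fst)).aestronglyMeasurable.mul
      hf.aestronglyMeasurable.comp_snd
  have hint : Integrable (Function.uncurry fun y a => gaussDensity d σ (α • a) y * f a)
      (volume.prod volume) := by
    refine (integrable_prod_iff' hmeas).2 ⟨ae_of_all _ fun a => ?_, ?_⟩
    · exact (integrable_gaussDensity hσ (α • a)).mul_const (f a)
    · simpa only [Function.uncurry_apply_pair, norm_mul,
        norm_of_nonneg (gaussDensity_nonneg _ _), integral_mul_const,
        integral_gaussDensity hσ, one_mul] using hf.norm
  rw [integral_integral_swap hint]
  simp only [integral_mul_const, integral_gaussDensity hσ, one_mul]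

end

lemma mul_exp_log_integral_div {α : Type*} [MeasurableSpace α] {ν : Measure α} {f : α → ℝ}
    {c : ℝ} (hc : 0 < c) (hf : 0 < ∫ a, f a ∂ν) :
    c * exp (log (∫ a, f a / c ∂ν)) = ∫ a, f a ∂ν := by
  rw [integral_div, exp_log (div_pos hf hc), mul_div_cancel₀ _ hc.ne']

theorem tilting_commutes_with_diffusion_general (d : ℕ)
    (μ Q : EuclideanSpace ℝ (Fin d) → ℝ)
    (hμpos : ∀ a, 0 < μ a)
    (αt σt : ℝ) (hσt : 0 < σt)
    (Z : ℝ) (hZ : Z = ∫ a, μ a * Real.exp (Q a))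
    (hZint : Integrable (fun a => μ a * Real.exp (Q a)))
    (pistar : EuclideanSpace ℝ (Fin d) → ℝ)
    (hpistar : ∀ a, pistar a = μ a * Real.exp (Q a) / Z)
    (μt : EuclideanSpace ℝ (Fin d) → ℝ)
    (hμtpos : ∀ x, 0 < μt x)
    (post : EuclideanSpace ℝ (Fin d) → EuclideanSpace ℝ (Fin d) → ℝ)
    (hpost : ∀ x a, post x a = μ a * gaussDensity d σt (αt • a) x / μt x)
    (Qt : EuclideanSpace ℝ (Fin d) → ℝ)
    (hQt : ∀ x, Qt x = Real.log (∫ a, post x a * Real.exp (Q a)))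
    (Zt : ℝ) (hZt : Zt = ∫ x, μt x * Real.exp (Qt x))
    (pit : EuclideanSpace ℝ (Fin d) → ℝ)
    (hpit : ∀ x, pit x = μt x * Real.exp (Qt x) / Zt) :
    ∀ x, pit x = ∫ a, gaussDensity d σt (αt • a) x * pistar a := by
  have htilt : ∀ x, μt x * exp (Qt x)
      = ∫ a, gaussDensity d σt (αt • a) x * (μ a * exp (Q a)) := by
    intro x
    have hpost_tilt : ∀ a, post x a * exp (Q a)
        = gaussDensity d σt (αt • a) x * (μ a * exp (Q a)) / μt x := by
      intro a
      rw [hpost]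
      ring
    simp_rw [hQt, hpost_tilt]
    exact mul_exp_log_integral_div (hμtpos x) (integral_gaussDensity_smul_mul_pos hσt αt x
      hZint fun a => mul_pos (hμpos a) (exp_pos _))
  have hZt_eq : Zt = Z := by
    simp_rw [hZt, hZ, htilt]
    exact integral_integral_gaussDensity_smul_mul hσt αt hZint
  intro x
  rw [hpit, htilt, hZt_eq, ← integral_div]
  congr 1 with a
  rw [hpistar]
  ring

/-- If `π*_t(a_t) ∝ μ_t(a_t) · exp(log E_{posterior}[e^{Q(a)}])` (i.e. the
normalized tilting of the diffused behavior marginal by the posterior log-moment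
generating value), then `π*_t` equals the Gaussian-diffused marginal of
`π*(a) ∝ μ(a) e^{Q(a)}`: tilting commutes with diffusion. -/
theorem tilting_commutes_with_diffusion (d : ℕ)
    (μ Q : EuclideanSpace ℝ (Fin d) → ℝ)
    (hμmeas : Measurable μ) (hμpos : ∀ a, 0 < μ a) (hμprob : ∫ a, μ a = 1)
    (hQmeas : Measurable Q) (hQbdd : ∃ M, ∀ a, |Q a| ≤ M)
    (αt σt : ℝ) (hαt : 0 < αt) (hσt : 0 < σt)
    (Z : ℝ) (hZ : Z = ∫ a, μ a * Real.exp (Q a))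
    (hZint : Integrable (fun a => μ a * Real.exp (Q a)))
    (pistar : EuclideanSpace ℝ (Fin d) → ℝ)
    (hpistar : ∀ a, pistar a = μ a * Real.exp (Q a) / Z)
    (μt : EuclideanSpace ℝ (Fin d) → ℝ)
    (hμt : ∀ x, μt x = ∫ a, gaussDensity d σt (αt • a) x * μ a)
    (hμtpos : ∀ x, 0 < μt x)
    (post : EuclideanSpace ℝ (Fin d) → EuclideanSpace ℝ (Fin d) → ℝ)
    (hpost : ∀ x a, post x a = μ a * gaussDensity d σt (αt • a) x / μt x)
    (Qt : EuclideanSpace ℝ (Fin d) → ℝ)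
    (hQt : ∀ x, Qt x = Real.log (∫ a, post x a * Real.exp (Q a)))
    (Zt : ℝ) (hZt : Zt = ∫ x, μt x * Real.exp (Qt x))
    (hZtint : Integrable (fun x => μt x * Real.exp (Qt x)))
    (pit : EuclideanSpace ℝ (Fin d) → ℝ)
    (hpit : ∀ x, pit x = μt x * Real.exp (Qt x) / Zt) :
    ∀ x, pit x = ∫ a, gaussDensity d σt (αt • a) x * pistar a :=
  tilting_commutes_with_diffusion_general d μ Q hμpos αt σt hσt Z hZ hZint pistar hpistar μt hμtpos
    post hpost Qt hQt Zt hZt pit hpit
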